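/- Fix positive integers n, d, L. The number of (d,L)-cylindric standard Young tableaux of size n equals the number of (L,d)-cylindric standard Young tableaux of size n. -/

import Mathlib

/-!
A cylindric partition `μ` (antitone, with `μ i ≤ μ j + L` for all `i, j`) has a diagram in `ℕ × ℕ`:
the cell `(j + d * m, c)` belongs to it iff `c + L * m < μ j`, i.e. the rows of `μ` are continued
periodically, shifted left by `L` every `d` rows. Column `c` of this diagram has
`μ'_c = ∑ j, ⌈(μ j - c) / L⌉` cells, and since `j ↦ ⌈(μ j - c) / L⌉` is antitone with values
differing by at most one, these are exactly the cells `(k, c)` with `k < μ'_c`. Hence the transposed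
diagram is the cylindric diagram of the `(L,d)`-cylindric partition `μ'`, so conjugation
`μ ↦ μ'` is an involution; it preserves the size (Hermite's identity
`∑_{c < L} ⌈(a - c) / L⌉ = a`) and is monotone. Finally, between cylindric partitions, adding a
single cell is always an interlacing step, so conjugating every shape of a tableau is a bijection
between the two sets of tableaux.
-/

/-- `α ≺_{(d,L)} β`: `β₁ ≥ α₁ ≥ β₂ ≥ α₂ ≥ ⋯ ≥ β_d ≥ α_d ≥ β₁ - L` (0-indexed). -/
def CylInterlace (d L : ℕ) (α β : Fin d → ℕ) : Prop :=
  (∀ i, α i ≤ β i) ∧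
  (∀ i : Fin d, ∀ h : (i : ℕ) + 1 < d, β ⟨(i : ℕ) + 1, h⟩ ≤ α i) ∧
  (∀ h : 0 < d, β ⟨0, h⟩ ≤ α ⟨d - 1, Nat.sub_lt h Nat.one_pos⟩ + L)

/-- `T` is a `(d,L)`-cylindric standard Young tableau of size `n`. -/
def IsCSYT (d L n : ℕ) (T : Fin (n + 1) → Fin d → ℕ) : Prop :=
  (∀ i, Antitone (T i)) ∧
  T 0 = (fun _ => 0) ∧
  (∀ i : Fin n, CylInterlace d L (T i.castSucc) (T i.succ)) ∧
  (∀ i : Fin (n + 1), ∑ j, T i j = (i : ℕ))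

open Finset

lemma lt_ceilDiv_iff {L a m : ℕ} (hL : 0 < L) : m < a ⌈/⌉ L ↔ L * m < a := by
  simpa only [not_le] using (ceilDiv_le_iff_le_mul hL (b := a) (c := m)).not

lemma ceilDiv_le_ceilDiv_add {L x y k : ℕ} (h : x ≤ y + L * k) : x ⌈/⌉ L ≤ y ⌈/⌉ L + k := by
  rcases L.eq_zero_or_pos with rfl | hL
  · simp
  refine le_of_forall_lt fun m hm => ?_
  rw [lt_ceilDiv_iff hL] at hm
  by_cases hmk : m < k
  · omega
  · have : m - k < y ⌈/⌉ L := by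
      rw [lt_ceilDiv_iff hL, Nat.mul_sub]
      have := Nat.mul_le_mul_left L (not_lt.1 hmk)
      omega
    omega

/-- An antitone sequence of `d` naturals whose values differ by at most one is determined by its
sum `s`: its first `s % d` entries are `s / d + 1`, the others `s / d`. -/
lemma lt_sum_iff_of_antitone {d : ℕ} {p : Fin d → ℕ} (hp : Antitone p)
    (hp₁ : ∀ i j, p i ≤ p j + 1) (j : Fin d) (m : ℕ) :
    j + d * m < ∑ i, p i ↔ m < p j := by
  have hupper : ∑ i, p i ≤ d * p j + j :=
    calc ∑ i, p i ≤ ∑ i, (p j + if i < j then 1 else 0) :=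
          sum_le_sum fun i _ => by
            split_ifs with h
            exacts [hp₁ i j, hp (not_lt.1 h)]
      _ = d * p j + j := by
          simp [sum_add_distrib, sum_boole, filter_gt_eq_Iio, Fin.card_Iio]
  have hlower : d * p j ≤ ∑ i, p i + (d - 1 - j) :=
    calc d * p j = ∑ _i : Fin d, p j := by simp
      _ ≤ ∑ i, (p i + if j < i then 1 else 0) :=
          sum_le_sum fun i _ => by
            split_ifs with h
            exacts [hp₁ j i, hp (not_lt.1 h)]
      _ = ∑ i, p i + (d - 1 - j) := by
          simp [sum_add_distrib, sum_boole, filter_lt_eq_Ioi, Fin.card_Ioi]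
  have hj := j.isLt
  constructor
  · intro h
    by_contra! hm
    have := Nat.mul_le_mul_left d hm
    omega
  · intro h
    have := Nat.mul_le_mul_left d (Nat.succ_le_of_lt h)
    rw [Nat.mul_succ] at this
    omega

lemma sum_sub_ceilDiv {L : ℕ} (hL : 0 < L) (a : ℕ) : ∑ c : Fin L, (a - c) ⌈/⌉ L = a := by
  refine eq_of_forall_lt_iff fun k => ?_
  have hk : (k % L : ℕ) + L * (k / L) = k := Nat.mod_add_div k L
  have key := lt_sum_iff_of_antitone (p := fun c : Fin L => (a - c) ⌈/⌉ L)
    (fun c c' h => ceilDiv_le_ceilDiv_add (k := 0) (by simp only [Fin.le_def] at h; omega))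
    (fun c c' => ceilDiv_le_ceilDiv_add (k := 1) (by have := c'.isLt; omega))
    ⟨k % L, Nat.mod_lt k hL⟩ (k / L)
  simp only [hk, lt_ceilDiv_iff hL] at key
  rw [key]
  omega

lemma le_add_of_sum_eq_add_one {ι : Type*} [Fintype ι] {α β : ι → ℕ} (hle : α ≤ β)
    (hsum : ∑ i, β i = ∑ i, α i + 1) {x y : ι} {K : ℕ} (hxy : x ≠ y ∨ 0 < K)
    (hβ : β x ≤ β y + K) (hα : α x ≤ α y + K) : β x ≤ α y + K := by
  classical
  have hsub (s : Finset ι) : ∑ i ∈ s, β i ≤ ∑ i ∈ s, α i + 1 := by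
    have := sum_le_sum fun i (_ : i ∈ sᶜ) => hle i
    rw [← sum_add_sum_compl s β, ← sum_add_sum_compl s α] at hsum
    omega
  by_cases h : x = y
  · subst h
    have hK := hxy.resolve_left (not_not.2 rfl)
    have := hsub {x}
    simp only [sum_singleton] at this
    have := hle x
    omega
  · have := hsub {x, y}
    rw [sum_pair h, sum_pair h] at this
    have := hle x
    have := hle y
    omega

structure IsCylindric (d L : ℕ) (μ : Fin d → ℕ) : Prop where
  antitone : Antitone μ
  le_add : ∀ i j, μ i ≤ μ j + L

lemma IsCylindric.cylInterlace {d L : ℕ} {α β : Fin d → ℕ} (hα : IsCylindric d L α)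
    (hβ : IsCylindric d L β) (hL : 0 < L) (hle : α ≤ β) (hsum : ∑ i, β i = ∑ i, α i + 1) :
    CylInterlace d L α β := by
  refine ⟨hle, fun i h => ?_, fun h => ?_⟩
  · have hi : i < ⟨i + 1, h⟩ := Fin.lt_def.2 (Nat.lt_succ_self _)
    exact le_add_of_sum_eq_add_one (K := 0) hle hsum (Or.inl hi.ne')
      (hβ.antitone hi.le) (hα.antitone hi.le)
  · exact le_add_of_sum_eq_add_one hle hsum (Or.inr hL) (hβ.le_add _ _) (hα.le_add _ _)

lemma IsCSYT.isCylindric {d L n : ℕ} {T : Fin (n + 1) → Fin d → ℕ} (hT : IsCSYT d L n T)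
    (i : Fin (n + 1)) : IsCylindric d L (T i) := by
  obtain ⟨hanti, hzero, hstep, -⟩ := hT
  refine ⟨hanti i, fun j j' => ?_⟩
  induction i using Fin.cases with
  | zero => simp [hzero]
  | succ k =>
    obtain ⟨hle, -, hwrap⟩ := hstep k
    have hd : 0 < d := j.pos
    calc T k.succ j ≤ T k.succ ⟨0, hd⟩ := hanti _ (Fin.le_def.2 (Nat.zero_le _))
      _ ≤ T k.castSucc ⟨d - 1, Nat.sub_lt hd Nat.one_pos⟩ + L := hwrap hd
      _ ≤ T k.succ ⟨d - 1, Nat.sub_lt hd Nat.one_pos⟩ + L := Nat.add_le_add_right (hle _) L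
      _ ≤ T k.succ j' + L :=
          Nat.add_le_add_right (hanti _ (Fin.le_def.2 (Nat.le_sub_one_of_lt j'.isLt))) L

/-- The column lengths of the cylindric diagram of `μ`. -/
def cylConj (d L : ℕ) (μ : Fin d → ℕ) : Fin L → ℕ :=
  fun c => ∑ j, (μ j - c) ⌈/⌉ L

lemma cylConj_zero (d L : ℕ) : cylConj d L (fun _ => 0) = fun _ => 0 := by
  funext c
  simp [cylConj]

lemma cylConj_monotone (d L : ℕ) : Monotone (cylConj d L) :=
  fun μ ν h c => sum_le_sum fun j _ => ceilDiv_le_ceilDiv_add (k := 0) <| by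
    have : μ j ≤ ν j := h j
    omega

lemma isCylindric_cylConj (d L : ℕ) (μ : Fin d → ℕ) : IsCylindric L d (cylConj d L μ) where
  antitone _ _ h := sum_le_sum fun j _ =>
    ceilDiv_le_ceilDiv_add (k := 0) (by simp only [Fin.le_def] at h; omega)
  le_add c c' := by
    simp only [cylConj]
    have := sum_le_sum fun j (_ : j ∈ univ) =>
      ceilDiv_le_ceilDiv_add (L := L) (x := μ j - c) (y := μ j - c') (k := 1)
        (by have := c'.isLt; omega)
    simpa [sum_add_distrib] using this

lemma sum_cylConj (d : ℕ) {L : ℕ} (hL : 0 < L) (μ : Fin d → ℕ) :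
    ∑ c, cylConj d L μ c = ∑ j, μ j := by
  simp only [cylConj]
  rw [sum_comm]
  exact sum_congr rfl fun j _ => sum_sub_ceilDiv hL (μ j)

lemma IsCylindric.lt_cylConj_iff {d L : ℕ} {μ : Fin d → ℕ} (hμ : IsCylindric d L μ)
    (hL : 0 < L) (c : Fin L) (j : Fin d) (m : ℕ) :
    j + d * m < cylConj d L μ c ↔ c + L * m < μ j := by
  rw [cylConj, lt_sum_iff_of_antitone
    (fun i i' h => ceilDiv_le_ceilDiv_add (k := 0) (by have := hμ.antitone h; omega))
    (fun i i' => ceilDiv_le_ceilDiv_add (k := 1) (by have := hμ.le_add i i'; omega)),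
    lt_ceilDiv_iff hL]
  omega

lemma IsCylindric.cylConj_cylConj {d L : ℕ} {μ : Fin d → ℕ} (hμ : IsCylindric d L μ)
    (hd : 0 < d) (hL : 0 < L) : cylConj L d (cylConj d L μ) = μ := by
  funext j
  have hcol (c : Fin L) : (cylConj d L μ c - j) ⌈/⌉ d = (μ j - c) ⌈/⌉ L :=
    eq_of_forall_lt_iff fun m => by
      rw [lt_ceilDiv_iff hd, lt_ceilDiv_iff hL]
      have := hμ.lt_cylConj_iff hL c j m
      omega
  simp only [cylConj] at hcol ⊢
  simp only [hcol]
  exact sum_sub_ceilDiv hL (μ j)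

lemma IsCSYT.cylConj {d L n : ℕ} {T : Fin (n + 1) → Fin d → ℕ} (hT : IsCSYT d L n T)
    (hd : 0 < d) (hL : 0 < L) : IsCSYT L d n (fun i => cylConj d L (T i)) := by
  obtain ⟨-, hzero, hstep, hsum⟩ := hT
  refine ⟨fun i => (isCylindric_cylConj d L (T i)).antitone, by simp only [hzero, cylConj_zero],
    fun i => ?_, fun i => by rw [sum_cylConj d hL, hsum]⟩
  refine (isCylindric_cylConj d L _).cylInterlace (isCylindric_cylConj d L _) hd
    (cylConj_monotone d L (hstep i).1) ?_
  rw [sum_cylConj d hL, sum_cylConj d hL, hsum, hsum, Fin.val_succ, Fin.val_castSucc]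

theorem card_CSYT_symm_general (n d L : ℕ) (hd : 0 < d) (hL : 0 < L) :
    Nat.card {T : Fin (n + 1) → Fin d → ℕ // IsCSYT d L n T} =
    Nat.card {T : Fin (n + 1) → Fin L → ℕ // IsCSYT L d n T} :=
  Nat.card_congr
    { toFun := fun T => ⟨fun i => cylConj d L (T.1 i), T.2.cylConj hd hL⟩
      invFun := fun T => ⟨fun i => cylConj L d (T.1 i), T.2.cylConj hL hd⟩
      left_inv := fun T => Subtype.ext <| funext fun i =>
        (T.2.isCylindric i).cylConj_cylConj hd hL
      right_inv := fun T => Subtype.ext <| funext fun i =>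
        (T.2.isCylindric i).cylConj_cylConj hL hd }

/-- The number of `(d,L)`-cylindric standard Young tableaux of size `n` equals the
number of `(L,d)`-cylindric standard Young tableaux of size `n`. -/
theorem card_CSYT_symm (n d L : ℕ) (hn : 0 < n) (hd : 0 < d) (hL : 0 < L) :
    Nat.card {T : Fin (n + 1) → Fin d → ℕ // IsCSYT d L n T} =
    Nat.card {T : Fin (n + 1) → Fin L → ℕ // IsCSYT L d n T} :=
  card_CSYT_symm_general n d L hd hL
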